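/- Let Γ be an M-metrised graph, let f : M → N be a homomorphism of sharp integral commutative monoids, and let Γ' be the edge contraction of Γ along f. Then dgon(Γ') ≤ dgon(Γ). -/

import Mathlib

noncomputable section
open scoped Classical

/-! ### Groupification of a cancellative additive commutative monoid -/

variable (M : Type) [AddCancelCommMonoid M]

def gpSetoid : Setoid (M × M) where
  r p q := p.1 + q.2 = q.1 + p.2
  iseqv := by
    refine ⟨fun p => rfl, fun h => h.symm, fun {p q r} h1 h2 => ?_⟩
    have key : (p.1 + r.2) + (q.1 + q.2) = (r.1 + p.2) + (q.1 + q.2) := by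
      calc (p.1 + r.2) + (q.1 + q.2) = (p.1 + q.2) + (q.1 + r.2) := by abel
        _ = (q.1 + p.2) + (r.1 + q.2) := by rw [h1, h2]
        _ = (r.1 + p.2) + (q.1 + q.2) := by abel
    exact add_right_cancel key

/-- The groupification `M^gp` of a cancellative commutative monoid `M`:
the quotient of `M × M` by `(a,b) ~ (c,d) ↔ a + d = c + b` (think of `(a,b)` as `a - b`). -/
def Gp : Type := Quotient (gpSetoid M)

namespace Gp

variable {M}

/-- The element `a - b` of `M^gp`. -/
def mk (a b : M) : Gp M := Quotient.mk (gpSetoid M) (a, b)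

instance : Zero (Gp M) := ⟨mk 0 0⟩

instance : Add (Gp M) :=
  ⟨Quotient.map₂ (fun p q => (p.1 + q.1, p.2 + q.2)) (by
    intro p p' hp q q' hq
    show (p.1 + q.1) + (p'.2 + q'.2) = (p'.1 + q'.1) + (p.2 + q.2)
    calc (p.1 + q.1) + (p'.2 + q'.2) = (p.1 + p'.2) + (q.1 + q'.2) := by abel
      _ = (p'.1 + p.2) + (q'.1 + q.2) := by rw [hp, hq]
      _ = (p'.1 + q'.1) + (p.2 + q.2) := by abel)⟩

instance : Neg (Gp M) :=
  ⟨Quotient.map (fun p => (p.2, p.1)) (by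
    intro p p' hp
    show p.2 + p'.1 = p'.2 + p.1
    calc p.2 + p'.1 = p'.1 + p.2 := by abel
      _ = p.1 + p'.2 := hp.symm
      _ = p'.2 + p.1 := by abel)⟩

lemma mk_add_mk (a b c d : M) : mk a b + mk c d = mk (a + c) (b + d) := rfl
lemma neg_mk (a b : M) : -(mk a b) = mk b a := rfl
lemma zero_def : (0 : Gp M) = mk 0 0 := rfl

instance : AddCommGroup (Gp M) where
  add := (· + ·)
  zero := 0
  neg := Neg.neg
  nsmul := nsmulRec
  zsmul := zsmulRec
  add_assoc := by
    intro a b c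
    induction a using Quotient.inductionOn with | h a =>
    induction b using Quotient.inductionOn with | h b =>
    induction c using Quotient.inductionOn with | h c =>
    exact Quotient.sound (by
      show ((a.1 + b.1) + c.1) + (a.2 + (b.2 + c.2)) = (a.1 + (b.1 + c.1)) + ((a.2 + b.2) + c.2)
      abel)
  zero_add := by
    intro a
    induction a using Quotient.inductionOn with | h a =>
    exact Quotient.sound (by
      show (0 + a.1) + a.2 = a.1 + (0 + a.2)
      abel)
  add_zero := by
    intro a
    induction a using Quotient.inductionOn with | h a =>
    exact Quotient.sound (by
      show (a.1 + 0) + a.2 = a.1 + (a.2 + 0)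
      abel)
  neg_add_cancel := by
    intro a
    induction a using Quotient.inductionOn with | h a =>
    exact Quotient.sound (by
      show (a.2 + a.1) + 0 = 0 + (a.1 + a.2)
      abel)
  add_comm := by
    intro a b
    induction a using Quotient.inductionOn with | h a =>
    induction b using Quotient.inductionOn with | h b =>
    exact Quotient.sound (by
      show (a.1 + b.1) + (b.2 + a.2) = (b.1 + a.1) + (a.2 + b.2)
      abel)

/-- The canonical map `M → M^gp`. -/
def of : M →+ Gp M where
  toFun a := mk a 0
  map_zero' := rfl
  map_add' := by
    intro a b
    exact (Quotient.sound (by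
      show (a + b) + (0 + 0) = (a + b) + 0
      abel) : mk (a + b) 0 = mk (a + b) (0 + 0))

/-- Functoriality of groupification: a monoid homomorphism `f : M →+ N` induces
`f^gp : M^gp →+ N^gp`. -/
def map {N : Type} [AddCancelCommMonoid N] (f : M →+ N) : Gp M →+ Gp N where
  toFun := Quotient.map (fun p => (f p.1, f p.2)) (by
    intro p p' hp
    show f p.1 + f p'.2 = f p'.1 + f p.2
    rw [← f.map_add, ← f.map_add, hp])
  map_zero' := by
    show mk (f 0) (f 0) = mk 0 0
    rw [f.map_zero]
  map_add' := by
    intro a b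
    induction a using Quotient.inductionOn with | h a =>
    induction b using Quotient.inductionOn with | h b =>
    show mk (f (a.1 + b.1)) (f (a.2 + b.2)) = mk (f a.1 + f b.1) (f a.2 + f b.2)
    rw [f.map_add, f.map_add]

end Gp

/-- Sharpness: the only invertible element of `M` is `0`. -/
def Sharp : Prop := ∀ a b : M, a + b = 0 → a = 0

/-! ### Monoid-metrised graphs -/

/-- A graph (Definition 2.3 of the paper) together with a metric taking values in the
monoid `M`: `X` is the finite set of vertices and half-edges, `r` sends an element to its
root vertex, `i` is the pairing involution on half-edges, and `l` assigns a length in `M`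
to every half-edge (and `0` to every vertex). -/
structure MGraph where
  X : Type
  [finX : Fintype X]
  r : X → X
  i : X → X
  r_idem : ∀ x, r (r x) = r x
  i_invol : ∀ x, i (i x) = x
  fix_iff : ∀ x, i x = x ↔ r x = x
  l : X → M
  l_i : ∀ x, l (i x) = l x
  l_zero_iff : ∀ x, l x = 0 ↔ i x = x

attribute [instance] MGraph.finX

namespace MGraph

variable {M} (G : MGraph M)

/-- `x` is a vertex iff it is fixed by the involution. -/
def IsVertex (x : G.X) : Prop := G.i x = x

/-- `x` is a half-edge iff it is not fixed by the involution. -/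
def IsHalfEdge (x : G.X) : Prop := G.i x ≠ x

/-- The vertex set of `G`. -/
abbrev V : Type := { x : G.X // G.IsVertex x }

/-- The root of any element of `X` is a vertex. -/
def rv (x : G.X) : G.V := ⟨G.r x, (G.fix_iff (G.r x)).mpr (G.r_idem x)⟩

/-- Two vertices are adjacent if some edge joins them. -/
def Adj (u v : G.V) : Prop := ∃ x, G.IsHalfEdge x ∧ G.rv x = u ∧ G.rv (G.i x) = v

/-- `G` is connected. (All graphs in the paper are assumed connected.) -/
def IsConnected : Prop := Nonempty G.X ∧ ∀ u v : G.V, Relation.ReflTransGen G.Adj u v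

/-- The degree of a divisor `D : V → ℤ`. -/
def degD (D : G.V → ℤ) : ℤ := ∑ v, D v

/-- A divisor is effective if all its coefficients are nonnegative. -/
def Effective (D : G.V → ℤ) : Prop := ∀ v, 0 ≤ D v

/-- `g : V → M^gp` is piecewise linear if, along every half-edge, the difference of the
values of `g` at the two endpoints is an integer multiple of the length of that edge. -/
def IsPL (g : G.V → Gp M) : Prop :=
  ∀ x, G.IsHalfEdge x → ∃ n : ℤ, g (G.rv x) - g (G.rv (G.i x)) = n • Gp.of (G.l x)

/-- The (outgoing) integer slope of `g` along the half-edge `x`. -/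
def slope (g : G.V → Gp M) (x : G.X) : ℤ :=
  if h : ∃ n : ℤ, g (G.rv x) - g (G.rv (G.i x)) = n • Gp.of (G.l x) then h.choose else 0

/-- The Laplacian of a piecewise linear function. -/
def lap (g : G.V → Gp M) : G.V → ℤ :=
  fun v => ∑ x : G.X, if G.IsHalfEdge x ∧ G.r x = v.val then G.slope g x else 0

/-- Principal divisors: those of the form `Δ(g)` for a piecewise linear `g`. -/
def IsPrincipal (D : G.V → ℤ) : Prop := ∃ g, G.IsPL g ∧ G.lap g = D

/-- The rank of a divisor `D`:
`r(D) = max { k : for every effective divisor F of degree k, |D - F| ≠ ∅ }`. -/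
def rank (D : G.V → ℤ) : ℤ :=
  sSup {k : ℤ | ∀ F : G.V → ℤ, G.Effective F → G.degD F = k →
    ∃ E : G.V → ℤ, G.Effective E ∧ G.IsPrincipal (D - F - E)}

/-- The divisorial gonality: the minimal degree of a divisor of rank at least 1. -/
def dgon : ℤ := sInf {d : ℤ | ∃ D : G.V → ℤ, 1 ≤ G.rank D ∧ G.degD D = d}

end MGraph

/-! ### Edge contractions along a monoid homomorphism -/

namespace MGraph

variable {M : Type} [AddCancelCommMonoid M] {N : Type} [AddCancelCommMonoid N]

/-- `c : Γ → Γ'` realises the `N`-metrised graph `Γ'` as the edge contraction of the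
`M`-metrised graph `Γ` along the monoid homomorphism `f : M → N`: all edge lengths are
replaced by their images under `f`, and the edges whose length becomes `0` are contracted
(their endpoints being identified). -/
structure IsEdgeContraction (f : M →+ N) (G : MGraph M) (G' : MGraph N)
    (c : G.X → G'.X) : Prop where
  /-- Every vertex and half-edge of `Γ'` comes from `Γ`. -/
  surj : Function.Surjective c
  /-- `c` commutes with the root maps. -/
  map_r : ∀ x, c (G.r x) = G'.r (c x)
  /-- `c` commutes with the involutions. -/
  map_i : ∀ x, c (G.i x) = G'.i (c x)
  /-- The length of the image of `x` is `f` of the length of `x`. -/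
  map_l : ∀ x, G'.l (c x) = f (G.l x)
  /-- `c x` is a vertex exactly when `x` is a vertex or a contracted half-edge. -/
  vertex_iff : ∀ x, G'.IsVertex (c x) ↔ (G.IsVertex x ∨ f (G.l x) = 0)
  /-- `c` is injective on the non-contracted half-edges. -/
  inj_halfedges : ∀ x y, G'.IsHalfEdge (c x) → c x = c y → x = y
  /-- Two vertices of `Γ` become equal in `Γ'` exactly when they are joined by a chain of
  contracted edges. -/
  vertex_glue : ∀ u v, G.IsVertex u → G.IsVertex v →
    (c u = c v ↔ Relation.ReflTransGen
      (fun a b => ∃ x, G.IsHalfEdge x ∧ f (G.l x) = 0 ∧ G.r x = a ∧ G.r (G.i x) = b) u v)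

namespace IsEdgeContraction

variable {f : M →+ N} {G : MGraph M} {G' : MGraph N} {c : G.X → G'.X}

/-- The induced map on vertices. -/
def cV (hc : IsEdgeContraction f G G' c) : G.V → G'.V :=
  fun v => ⟨c v.val, by
    show G'.i (c v.val) = c v.val
    conv_lhs => rw [← hc.map_i v.val, v.property]⟩

/-- The pushforward of divisors along the edge contraction:
`f_*(D) = ∑_v D(v) · [c(v)]`. -/
def push (hc : IsEdgeContraction f G G' c) (D : G.V → ℤ) : G'.V → ℤ :=
  fun v' => ∑ v : G.V, if hc.cV v = v' then D v else 0

end IsEdgeContraction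

end MGraph


/-!
Push divisors forward along the vertex map of the contraction. This preserves degree and
effectivity, is onto the effective divisors of `Γ'`, and maps principal divisors to principal
divisors: if `g` is piecewise linear on `Γ`, then `f^gp ∘ g` is constant along contracted edges
(their lengths are killed by `f`), so it descends to a piecewise linear `g'` on `Γ'`; surviving
edges keep their slopes, and the slopes of contracted edges cancel in pairs in `Δ(g)`. Hence the
pushforward of a rank-`≥ 1` divisor of degree `dgon(Γ)` has rank `≥ 1` on `Γ'`.
-/

namespace Sharp

variable {M : Type} [AddCancelCommMonoid M]

lemma eq_zero_of_nsmul_eq_zero (hM : Sharp M) {n : ℕ} (hn : n ≠ 0) {a : M} (h : n • a = 0) :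
    a = 0 := by
  obtain ⟨k, rfl⟩ := Nat.exists_eq_succ_of_ne_zero hn
  exact hM a (k • a) (by rwa [succ_nsmul'] at h)

end Sharp

namespace Gp

variable {M : Type} [AddCancelCommMonoid M]

lemma of_injective : Function.Injective (Gp.of : M →+ Gp M) := fun a b h => by
  have h' : a + 0 = b + 0 := Quotient.exact h
  simpa using h'

lemma zsmul_of_injective (hM : Sharp M) {a : M} (ha : a ≠ 0) :
    Function.Injective fun n : ℤ => n • Gp.of a := by
  intro n m (h : n • Gp.of a = m • Gp.of a)
  by_contra hnm
  have hk : Gp.of ((n - m).natAbs • a) = Gp.of 0 := by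
    rw [map_nsmul, map_zero, natAbs_nsmul_eq_zero, sub_smul, h, sub_self]
  exact ha (hM.eq_zero_of_nsmul_eq_zero (by omega) (of_injective hk))

lemma map_of {N : Type} [AddCancelCommMonoid N] (f : M →+ N) (a : M) :
    Gp.map f (Gp.of a) = Gp.of (f a) := by
  show Gp.mk (f a) (f 0) = Gp.mk (f a) 0
  rw [f.map_zero]

end Gp

namespace MGraph

variable {M : Type} [AddCancelCommMonoid M] (G : MGraph M)

def halfEdges : Finset G.X := Finset.univ.filter G.IsHalfEdge

lemma rv_r (x : G.X) : G.rv (G.r x) = G.rv x := Subtype.ext (G.r_idem x)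

lemma rv_val (v : G.V) : G.rv v.val = v := Subtype.ext ((G.fix_iff v.val).mp v.property)

lemma IsHalfEdge.i {x : G.X} (hx : G.IsHalfEdge x) : G.IsHalfEdge (G.i x) :=
  fun h => hx (by simpa only [G.i_invol] using congrArg G.i h)

lemma l_ne_zero {x : G.X} (hx : G.IsHalfEdge x) : G.l x ≠ 0 :=
  fun h => hx ((G.l_zero_iff x).mp h)

variable {G}

lemma sub_eq_slope_zsmul {g : G.V → Gp M} {x : G.X}
    (h : ∃ n : ℤ, g (G.rv x) - g (G.rv (G.i x)) = n • Gp.of (G.l x)) :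
    g (G.rv x) - g (G.rv (G.i x)) = G.slope g x • Gp.of (G.l x) := by
  rw [slope, dif_pos h]
  exact h.choose_spec

lemma slope_eq (hM : Sharp M) {g : G.V → Gp M} {x : G.X} (hx : G.IsHalfEdge x) {n : ℤ}
    (h : g (G.rv x) - g (G.rv (G.i x)) = n • Gp.of (G.l x)) : G.slope g x = n :=
  Gp.zsmul_of_injective hM (G.l_ne_zero hx) ((sub_eq_slope_zsmul ⟨n, h⟩).symm.trans h)

lemma IsPL.slope_i (hM : Sharp M) {g : G.V → Gp M} (hg : G.IsPL g) {x : G.X}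
    (hx : G.IsHalfEdge x) : G.slope g (G.i x) = - G.slope g x := by
  apply slope_eq hM hx.i
  rw [G.i_invol, G.l_i, neg_smul, ← sub_eq_slope_zsmul (hg x hx), neg_sub]

lemma IsPL.sum_slope_eq_zero (hM : Sharp M) {g : G.V → Gp M} (hg : G.IsPL g) (s : Finset G.X)
    (hs : ∀ x ∈ s, G.IsHalfEdge x ∧ G.i x ∈ s) : ∑ x ∈ s, G.slope g x = 0 :=
  Finset.sum_involution (fun x _ => G.i x)
    (fun x hx => by rw [hg.slope_i hM (hs x hx).1, add_neg_cancel])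
    (fun x hx _ => (hs x hx).1) (fun x hx => (hs x hx).2) (fun x _ => G.i_invol x)

lemma lap_apply (g : G.V → Gp M) (v : G.V) :
    G.lap g v = ∑ x ∈ G.halfEdges with G.rv x = v, G.slope g x := by
  simp only [lap, halfEdges, Finset.filter_filter, Finset.sum_filter, Subtype.ext_iff]
  rfl

lemma degD_lap (hM : Sharp M) {g : G.V → Gp M} (hg : G.IsPL g) : G.degD (G.lap g) = 0 := by
  simp only [degD, lap_apply]
  rw [Finset.sum_fiberwise]
  exact hg.sum_slope_eq_zero hM _ fun x hx => by
    simp only [halfEdges, Finset.mem_filter, Finset.mem_univ, true_and] at hx ⊢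
    exact ⟨hx, hx.i⟩


variable (G)

/-- `|D| ≠ ∅`: `D` is linearly equivalent to an effective divisor. -/
def LinSysNonempty (D : G.V → ℤ) : Prop := ∃ E, G.Effective E ∧ G.IsPrincipal (D - E)

/-- `|D - F| ≠ ∅` for every `F ∈ Div_+^k(Γ)`. -/
def RankAtLeast (D : G.V → ℤ) (k : ℤ) : Prop :=
  ∀ F, G.Effective F → G.degD F = k → G.LinSysNonempty (D - F)

variable {G}

lemma rank_eq_sSup (D : G.V → ℤ) : G.rank D = sSup {k | G.RankAtLeast D k} := rfl

lemma degD_add (D E : G.V → ℤ) : G.degD (D + E) = G.degD D + G.degD E :=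
  Finset.sum_add_distrib

lemma degD_sub (D E : G.V → ℤ) : G.degD (D - E) = G.degD D - G.degD E :=
  Finset.sum_sub_distrib _ _

lemma Effective.add {D E : G.V → ℤ} (hD : G.Effective D) (hE : G.Effective E) :
    G.Effective (D + E) :=
  fun v => add_nonneg (hD v) (hE v)

lemma Effective.degD_nonneg {D : G.V → ℤ} (hD : G.Effective D) : 0 ≤ G.degD D :=
  Finset.sum_nonneg fun v _ => hD v

lemma exists_effective_degD_eq [Nonempty G.V] {k : ℤ} (hk : 0 ≤ k) :
    ∃ F, G.Effective F ∧ G.degD F = k := by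
  obtain ⟨w⟩ := ‹Nonempty G.V›
  refine ⟨Pi.single w k, fun v => ?_, by simp [degD]⟩
  rw [Pi.single_apply]
  split_ifs <;> omega

lemma IsPrincipal.degD_eq_zero (hM : Sharp M) {D : G.V → ℤ} (hD : G.IsPrincipal D) :
    G.degD D = 0 := by
  obtain ⟨g, hg, rfl⟩ := hD
  exact G.degD_lap hM hg

lemma isPrincipal_zero (hM : Sharp M) : G.IsPrincipal 0 :=
  ⟨0, fun _ _ => ⟨0, by simp⟩, funext fun v => Finset.sum_eq_zero fun x _ => by
    split_ifs with h
    · exact G.slope_eq hM h.1 (by simp)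
    · rfl⟩

lemma LinSysNonempty.degD_nonneg (hM : Sharp M) {D : G.V → ℤ} (hD : G.LinSysNonempty D) :
    0 ≤ G.degD D := by
  obtain ⟨E, hE, hDE⟩ := hD
  have := hDE.degD_eq_zero hM
  rw [degD_sub] at this
  linarith [hE.degD_nonneg]

lemma Effective.linSysNonempty (hM : Sharp M) {D : G.V → ℤ} (hD : G.Effective D) :
    G.LinSysNonempty D :=
  ⟨D, hD, by rw [sub_self]; exact isPrincipal_zero hM⟩

lemma LinSysNonempty.of_sub {D P : G.V → ℤ} (hD : G.LinSysNonempty (D - P))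
    (hP : G.Effective P) : G.LinSysNonempty D := by
  obtain ⟨E, hE, hDE⟩ := hD
  exact ⟨E + P, hE.add hP, by rwa [sub_sub, add_comm P] at hDE⟩

lemma RankAtLeast.le_degD (hM : Sharp M) [Nonempty G.V] {D : G.V → ℤ} {k : ℤ}
    (hD : G.RankAtLeast D k) (hk : 0 ≤ k) : k ≤ G.degD D := by
  obtain ⟨F, hF, hdeg⟩ := G.exists_effective_degD_eq hk
  have := (hD F hF hdeg).degD_nonneg hM
  rw [degD_sub, hdeg] at this
  linarith

lemma RankAtLeast.mono [Nonempty G.V] {D : G.V → ℤ} {j k : ℤ} (hD : G.RankAtLeast D k)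
    (hjk : j ≤ k) : G.RankAtLeast D j := by
  intro F hF hdeg
  obtain ⟨P, hP, hPdeg⟩ := G.exists_effective_degD_eq (sub_nonneg.mpr hjk)
  refine LinSysNonempty.of_sub ?_ hP
  rw [sub_sub]
  exact hD _ (hF.add hP) (by rw [degD_add, hdeg, hPdeg]; ring)

lemma bddAbove_rankAtLeast (hM : Sharp M) [Nonempty G.V] (D : G.V → ℤ) :
    BddAbove {k | G.RankAtLeast D k} :=
  ⟨max (G.degD D) 0, fun k hk => (le_total k 0).elim (le_max_of_le_right)
    fun h => le_max_of_le_left (RankAtLeast.le_degD hM hk h)⟩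

lemma one_le_rank_iff (hM : Sharp M) [Nonempty G.V] {D : G.V → ℤ} :
    1 ≤ G.rank D ↔ G.RankAtLeast D 1 := by
  rw [rank_eq_sSup]
  refine ⟨fun h => ?_, fun h => le_csSup (bddAbove_rankAtLeast hM D) h⟩
  have hne : {k | G.RankAtLeast D k}.Nonempty := by
    by_contra hne
    rw [Set.not_nonempty_iff_eq_empty.mp hne, Int.csSup_empty] at h
    omega
  exact RankAtLeast.mono (Int.csSup_mem hne (bddAbove_rankAtLeast hM D)) h

lemma one_le_degD_of_one_le_rank (hM : Sharp M) [Nonempty G.V] {D : G.V → ℤ}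
    (hD : 1 ≤ G.rank D) : 1 ≤ G.degD D :=
  ((one_le_rank_iff hM).mp hD).le_degD hM zero_le_one

lemma one_le_rank_one (hM : Sharp M) [Nonempty G.V] : 1 ≤ G.rank 1 := by
  refine (one_le_rank_iff hM).mpr fun F hF hdeg => Effective.linSysNonempty hM fun v => ?_
  have : F v ≤ G.degD F := Finset.single_le_sum (fun u _ => hF u) (Finset.mem_univ v)
  simp only [Pi.sub_apply, Pi.one_apply]
  omega

lemma bddBelow_degD_of_one_le_rank (hM : Sharp M) [Nonempty G.V] :
    BddBelow {d | ∃ D : G.V → ℤ, 1 ≤ G.rank D ∧ G.degD D = d} :=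
  ⟨1, by rintro _ ⟨D, hD, rfl⟩; exact one_le_degD_of_one_le_rank hM hD⟩

lemma dgon_le_degD (hM : Sharp M) [Nonempty G.V] {D : G.V → ℤ} (hD : 1 ≤ G.rank D) :
    G.dgon ≤ G.degD D :=
  csInf_le (bddBelow_degD_of_one_le_rank hM) ⟨D, hD, rfl⟩

lemma exists_degD_eq_dgon (hM : Sharp M) [Nonempty G.V] :
    ∃ D, 1 ≤ G.rank D ∧ G.degD D = G.dgon :=
  Int.csInf_mem (s := {d | ∃ D : G.V → ℤ, 1 ≤ G.rank D ∧ G.degD D = d})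
    ⟨_, 1, one_le_rank_one hM, rfl⟩ (bddBelow_degD_of_one_le_rank hM)

end MGraph

namespace MGraph

variable {M N : Type} [AddCancelCommMonoid M] [AddCancelCommMonoid N] {G : MGraph M}

lemma IsPL.map_eq_of_map_l_eq_zero {g : G.V → Gp M} (hg : G.IsPL g) (f : M →+ N) {x : G.X}
    (hx : G.IsHalfEdge x) (hfx : f (G.l x) = 0) :
    Gp.map f (g (G.rv x)) = Gp.map f (g (G.rv (G.i x))) := by
  obtain ⟨n, hn⟩ := hg x hx
  rw [← sub_eq_zero, ← map_sub, hn, map_zsmul, Gp.map_of, hfx, map_zero, smul_zero]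

namespace IsEdgeContraction

variable {f : M →+ N} {G' : MGraph N} {c : G.X → G'.X} (hc : IsEdgeContraction f G G' c)
include hc

lemma isHalfEdge_iff (x : G.X) :
    G'.IsHalfEdge (c x) ↔ G.IsHalfEdge x ∧ f (G.l x) ≠ 0 :=
  (hc.vertex_iff x).not.trans not_or

lemma cV_rv (x : G.X) : hc.cV (G.rv x) = G'.rv (c x) := Subtype.ext (hc.map_r x)

lemma cV_surjective : Function.Surjective hc.cV := fun v' => by
  obtain ⟨x, hx⟩ := hc.surj v'.val
  exact ⟨G.rv x, by rw [hc.cV_rv, hx, G'.rv_val]⟩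

lemma cV_rv_i_of_map_l_eq_zero {x : G.X} (hfx : f (G.l x) = 0) :
    hc.cV (G.rv (G.i x)) = hc.cV (G.rv x) := by
  have hv : G'.i (c x) = c x := (hc.vertex_iff x).mpr (Or.inr hfx)
  rw [hc.cV_rv, hc.cV_rv, hc.map_i, hv]

lemma push_apply (D : G.V → ℤ) (v' : G'.V) : hc.push D v' = ∑ v with hc.cV v = v', D v :=
  (Finset.sum_filter _ _).symm

lemma degD_push (D : G.V → ℤ) : G'.degD (hc.push D) = G.degD D := by
  simp only [degD, push_apply]
  exact Finset.sum_fiberwise _ _ _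

lemma push_sub (D E : G.V → ℤ) : hc.push (D - E) = hc.push D - hc.push E := by
  funext v'
  simp only [push_apply, Pi.sub_apply, Finset.sum_sub_distrib]

lemma effective_push {D : G.V → ℤ} (hD : G.Effective D) : G'.Effective (hc.push D) :=
  fun v' => by
    rw [push_apply]
    exact Finset.sum_nonneg fun v _ => hD v

lemma exists_effective_push_eq {F' : G'.V → ℤ} (hF' : G'.Effective F') :
    ∃ F, G.Effective F ∧ hc.push F = F' := by
  let sec := Function.surjInv hc.cV_surjective
  refine ⟨fun v => if v = sec (hc.cV v) then F' (hc.cV v) else 0,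
    fun v => by dsimp only; split_ifs <;> simp [hF' _], funext fun v' => ?_⟩
  rw [push_apply, Finset.sum_congr rfl fun v hv => by rw [(Finset.mem_filter.mp hv).2],
    Finset.sum_ite_eq', if_pos]
  simpa [sec] using Function.surjInv_eq hc.cV_surjective v'

lemma push_lap_apply (g : G.V → Gp M) (v' : G'.V) :
    hc.push (G.lap g) v' = ∑ x ∈ G.halfEdges with hc.cV (G.rv x) = v', G.slope g x := by
  simp only [push_apply, lap_apply]
  rw [Finset.sum_fiberwise_eq_sum_filter]
  simp only [Finset.mem_filter, Finset.mem_univ, true_and]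

lemma sum_slope_contracted_eq_zero (hM : Sharp M) {g : G.V → Gp M} (hg : G.IsPL g) (v' : G'.V) :
    ∑ x ∈ G.halfEdges with hc.cV (G.rv x) = v' ∧ f (G.l x) = 0, G.slope g x = 0 := by
  refine hg.sum_slope_eq_zero hM _ fun x hx => ?_
  simp only [halfEdges, Finset.mem_filter, Finset.mem_univ, true_and] at hx ⊢
  exact ⟨hx.1, hx.1.i, by rw [hc.cV_rv_i_of_map_l_eq_zero hx.2.2, hx.2.1],
    by rw [G.l_i, hx.2.2]⟩

lemma map_eq_of_cV_eq {g : G.V → Gp M} (hg : G.IsPL g) {u v : G.V}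
    (huv : hc.cV u = hc.cV v) :
    Gp.map f (g u) = Gp.map f (g v) := by
  have hrel := (hc.vertex_glue u.val v.val u.property v.property).mp (congrArg Subtype.val huv)
  rw [← G.rv_val u, ← G.rv_val v]
  generalize v.val = y at hrel ⊢
  induction hrel with
  | refl => rfl
  | tail _ hstep ih =>
    obtain ⟨x, hx, hfx, rfl, rfl⟩ := hstep
    rw [ih, G.rv_r, G.rv_r, hg.map_eq_of_map_l_eq_zero f hx hfx]

lemma exists_descent {g : G.V → Gp M} (hg : G.IsPL g) :
    ∃ g' : G'.V → Gp N, ∀ v, g' (hc.cV v) = Gp.map f (g v) :=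
  ⟨Function.extend hc.cV (fun v => Gp.map f (g v)) 0,
    Function.FactorsThrough.extend_apply (fun _ _ h => hc.map_eq_of_cV_eq hg h) 0⟩

section Descent

variable {g : G.V → Gp M} {g' : G'.V → Gp N} (hg' : ∀ v, g' (hc.cV v) = Gp.map f (g v))
include hg'

lemma sub_eq_zsmul_of_descent {x : G.X} {n : ℤ}
    (h : g (G.rv x) - g (G.rv (G.i x)) = n • Gp.of (G.l x)) :
    g' (G'.rv (c x)) - g' (G'.rv (G'.i (c x))) = n • Gp.of (G'.l (c x)) := by
  rw [← hc.map_i, ← hc.cV_rv, ← hc.cV_rv, hg', hg', ← map_sub, h, map_zsmul, Gp.map_of,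
    hc.map_l]

lemma isPL_of_descent (hg : G.IsPL g) : G'.IsPL g' := by
  intro x' hx'
  obtain ⟨x, rfl⟩ := hc.surj x'
  obtain ⟨n, hn⟩ := hg x ((hc.isHalfEdge_iff x).mp hx').1
  exact ⟨n, hc.sub_eq_zsmul_of_descent hg' hn⟩

lemma slope_of_descent (hN : Sharp N) (hg : G.IsPL g) {x : G.X} (hx : G'.IsHalfEdge (c x)) :
    G'.slope g' (c x) = G.slope g x :=
  G'.slope_eq hN hx <| hc.sub_eq_zsmul_of_descent hg' <|
    G.sub_eq_slope_zsmul (hg x ((hc.isHalfEdge_iff x).mp hx).1)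

lemma sum_slope_of_descent (hN : Sharp N) (hg : G.IsPL g) (v' : G'.V) :
    ∑ x' ∈ G'.halfEdges with G'.rv x' = v', G'.slope g' x' =
      ∑ x ∈ G.halfEdges with hc.cV (G.rv x) = v' ∧ ¬f (G.l x) = 0, G.slope g x := by
  have hmem : ∀ x, c x ∈ {x' ∈ G'.halfEdges | G'.rv x' = v'} ↔
      x ∈ {x ∈ G.halfEdges | hc.cV (G.rv x) = v' ∧ ¬f (G.l x) = 0} := by
    intro x
    simp only [halfEdges, Finset.mem_filter, Finset.mem_univ, true_and, hc.isHalfEdge_iff,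
      ← hc.cV_rv]
    tauto
  have hhalf : ∀ x ∈ G.halfEdges.filter (fun x => hc.cV (G.rv x) = v' ∧ ¬f (G.l x) = 0),
      G'.IsHalfEdge (c x) := fun x hx => by
    simpa [halfEdges] using (Finset.mem_filter.mp ((hmem x).mpr hx)).1
  refine (Finset.sum_nbij c (fun x hx => (hmem x).mpr hx) ?_ ?_ ?_).symm
  · exact fun x hx y _ hxy => hc.inj_halfedges x y (hhalf x hx) hxy
  · intro x' hx'
    obtain ⟨x, rfl⟩ := hc.surj x'
    exact ⟨x, (hmem x).mp hx', rfl⟩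
  · exact fun x hx => (hc.slope_of_descent hg' hN hg (hhalf x hx)).symm

lemma lap_of_descent (hM : Sharp M) (hN : Sharp N) (hg : G.IsPL g) :
    G'.lap g' = hc.push (G.lap g) := by
  funext v'
  rw [lap_apply, hc.sum_slope_of_descent hg' hN hg, hc.push_lap_apply,
    ← Finset.sum_filter_add_sum_filter_not (G.halfEdges.filter fun x => hc.cV (G.rv x) = v')
      (fun x => f (G.l x) = 0),
    Finset.filter_filter, Finset.filter_filter, hc.sum_slope_contracted_eq_zero hM hg, zero_add]

end Descent

lemma isPrincipal_push (hM : Sharp M) (hN : Sharp N) {D : G.V → ℤ} (hD : G.IsPrincipal D) :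
    G'.IsPrincipal (hc.push D) := by
  obtain ⟨g, hg, rfl⟩ := hD
  obtain ⟨g', hg'⟩ := hc.exists_descent hg
  exact ⟨g', hc.isPL_of_descent hg' hg, hc.lap_of_descent hg' hM hN hg⟩

lemma linSysNonempty_push (hM : Sharp M) (hN : Sharp N) {D : G.V → ℤ}
    (hD : G.LinSysNonempty D) : G'.LinSysNonempty (hc.push D) := by
  obtain ⟨E, hE, hDE⟩ := hD
  exact ⟨hc.push E, hc.effective_push hE, hc.push_sub D E ▸ hc.isPrincipal_push hM hN hDE⟩

lemma one_le_rank_push (hM : Sharp M) (hN : Sharp N) [Nonempty G.V] {D : G.V → ℤ}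
    (hD : 1 ≤ G.rank D) : 1 ≤ G'.rank (hc.push D) := by
  have : Nonempty G'.V := ‹Nonempty G.V›.map hc.cV
  refine (one_le_rank_iff hN).mpr fun F' hF' hdeg' => ?_
  obtain ⟨F, hF, rfl⟩ := hc.exists_effective_push_eq hF'
  have hFD : G.LinSysNonempty (D - F) :=
    (one_le_rank_iff hM).mp hD F hF (by rwa [hc.degD_push] at hdeg')
  rw [← hc.push_sub]
  exact hc.linSysNonempty_push hM hN hFD

end IsEdgeContraction

end MGraph

/-- **Corollary 4.6.** Let `Γ` be an `M`-metrised graph, `f : M → N` a homomorphism of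
sharp integral monoids, and `Γ'` the edge contraction of `Γ` along `f`. Then
`dgon(Γ') ≤ dgon(Γ)`. -/
theorem MGraph.IsEdgeContraction.dgon_le (M N : Type) [AddCancelCommMonoid M]
    [AddCancelCommMonoid N] (hsharpM : Sharp M) (hsharpN : Sharp N)
    (G : MGraph M) (G' : MGraph N) (hconn : G.IsConnected)
    (f : M →+ N) (c : G.X → G'.X) (hc : MGraph.IsEdgeContraction f G G' c) :
    G'.dgon ≤ G.dgon := by
  have hV : Nonempty G.V := hconn.1.map G.rv
  have hV' : Nonempty G'.V := hV.map hc.cV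
  obtain ⟨D, hD, hdeg⟩ := G.exists_degD_eq_dgon hsharpM
  calc G'.dgon ≤ G'.degD (hc.push D) :=
        G'.dgon_le_degD hsharpN (hc.one_le_rank_push hsharpM hsharpN hD)
    _ = G.dgon := by rw [hc.degD_push, hdeg]

end
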